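/- (Theorem 1, pointwise form.) Let n_j : ℝ → E (j=1,…,N) be differentiable maps with derivatives ṅ_j such that {n_j(t)} is an orthonormal basis of E for every t. Fix t and set b_j = −i⟪ṅ_j(t), n_j(t)⟫; each b_j is a real number. Then for every choice of real numbers θ_1,…,θ_N, Re Tr[H_SA(t)²] = Σ_j ( ‖ṅ_j(t)‖² + (θ_j − b_j)² − b_j² ) ≥ Σ_j ( ‖ṅ_j(t)‖² − b_j² ), with equality if and only if θ_j = b_j for every j. Hence the energy density Tr[H_SA(t)²] of the generalized transitionless Hamiltonian is uniquely minimized by the choice θ_j = −i⟪ṅ_j(t), n_j(t)⟫. -/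

import Mathlib

/-- The rank-one operator `|u⟩⟨v| : z ↦ ⟪v, z⟫ • u`. -/
noncomputable def ketBra {E : Type*} [NormedAddCommGroup E] [InnerProductSpace ℂ E]
    (u v : E) : E →L[ℂ] E :=
  (innerSL ℂ v).smulRight u

/-- The shortcut (transitionless) Hamiltonian
`H_SA(t) = i Σ_j ( |ṅ_j(t)⟩⟨n_j(t)| + i θ_j(t) |n_j(t)⟩⟨n_j(t)| )`. -/
noncomputable def HSA {E : Type*} [NormedAddCommGroup E] [InnerProductSpace ℂ E]
    {N : ℕ} (n n' : Fin N → ℝ → E) (θ : Fin N → ℝ → ℝ) (t : ℝ) : E →L[ℂ] E :=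
  Complex.I • ∑ j : Fin N,
    (ketBra (n' j t) (n j t) + (Complex.I * (θ j t : ℂ)) • ketBra (n j t) (n j t))

/-!
Write `H_SA = i S` with `S = Σ_j |m_j⟩⟨n_j|` and `m_j = ṅ_j + iθ_j n_j`; since
`|u⟩⟨v| ∘ |w⟩⟨z| = ⟪v, w⟫ |u⟩⟨z|` and `Tr |u⟩⟨v| = ⟪v, u⟫`, one gets
`Tr H_SA² = -Σ_{j,k} ⟪n_j, m_k⟫ ⟪n_k, m_j⟫`. Differentiating `⟪n_j, n_k⟫ = δ_jk` shows that the
matrix `⟪n_j, ṅ_k⟫` is skew-Hermitian: by Parseval its θ-free part contributes `Σ_k ‖ṅ_k‖²`,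
and its diagonal is imaginary, which makes the `b_j` real. What remains is
`Σ_j (θ_j² - 2 θ_j b_j)`, and completing the square finishes the proof.
-/

open scoped InnerProductSpace
open Finset

section RankOne

variable {E : Type*} [NormedAddCommGroup E] [InnerProductSpace ℂ E]

theorem ketBra_apply (u v z : E) : ketBra u v z = ⟪v, z⟫_ℂ • u := rfl

theorem ketBra_add_left (u w v : E) : ketBra (u + w) v = ketBra u v + ketBra w v := by
  ext z; simp only [ketBra_apply, add_apply, smul_add]

theorem ketBra_smul_left (c : ℂ) (u v : E) : ketBra (c • u) v = c • ketBra u v := by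
  ext z; simp only [ketBra_apply, smul_apply, smul_comm c]

theorem ketBra_comp_ketBra (u v w z : E) :
    (ketBra u v).comp (ketBra w z) = ⟪v, w⟫_ℂ • ketBra u z := by
  ext x
  simp only [ketBra_apply, ContinuousLinearMap.comp_apply, smul_apply,
    inner_smul_right, smul_smul, mul_comm]

theorem trace_ketBra [FiniteDimensional ℂ E] (u v : E) :
    LinearMap.trace ℂ E (ketBra u v) = ⟪v, u⟫_ℂ :=
  LinearMap.trace_smulRight _ _

theorem trace_sum_ketBra_comp_self [FiniteDimensional ℂ E] {ι : Type*} [Fintype ι]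
    (m v : ι → E) :
    LinearMap.trace ℂ E
        (((∑ j, ketBra (m j) (v j)).comp (∑ k, ketBra (m k) (v k)) : E →L[ℂ] E) : E →ₗ[ℂ] E)
      = ∑ j, ∑ k, ⟪v j, m k⟫_ℂ * ⟪v k, m j⟫_ℂ := by
  simp only [ContinuousLinearMap.finsetSum_comp, ContinuousLinearMap.comp_finsetSum,
    ketBra_comp_ketBra, ContinuousLinearMap.toLinearMap_sum, ContinuousLinearMap.toLinearMap_smul,
    map_sum, map_smul, trace_ketBra, smul_eq_mul]
  exact sum_comm

end RankOne

theorem inner_add_inner_eq_zero_of_hasDerivAt {𝕜 E : Type*} [RCLike 𝕜] [NormedAddCommGroup E]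
    [InnerProductSpace 𝕜 E] [NormedSpace ℝ E] {u v : ℝ → E} {u' v' : E} {t : ℝ} {c : 𝕜}
    (hu : HasDerivAt u u' t) (hv : HasDerivAt v v' t) (hc : ∀ s, ⟪u s, v s⟫_𝕜 = c) :
    ⟪u t, v'⟫_𝕜 + ⟪u', v t⟫_𝕜 = 0 := by
  have h := hu.inner 𝕜 hv
  simp only [hc] at h
  exact h.unique (hasDerivAt_const t c)

section Inner

variable {𝕜 E : Type*} [RCLike 𝕜] [NormedAddCommGroup E] [InnerProductSpace 𝕜 E]

theorem re_inner_eq_zero_of_inner_add_inner_swap_eq_zero {x y : E}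
    (h : ⟪x, y⟫_𝕜 + ⟪y, x⟫_𝕜 = 0) : RCLike.re ⟪x, y⟫_𝕜 = 0 := by
  have h' := congrArg RCLike.re h
  rw [map_add, inner_re_symm y x, map_zero] at h'
  linarith

variable {ι : Type*} [Fintype ι] {v : ι → E}

theorem Orthonormal.sum_sum_inner_add_smul_mul_inner_add_smul (hv : Orthonormal 𝕜 v)
    (d : ι → E) (c : ι → 𝕜) :
    ∑ j, ∑ k, ⟪v j, d k + c k • v k⟫_𝕜 * ⟪v k, d j + c j • v j⟫_𝕜
      = ∑ j, ∑ k, ⟪v j, d k⟫_𝕜 * ⟪v k, d j⟫_𝕜 + 2 * ∑ k, c k * ⟪v k, d k⟫_𝕜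
        + ∑ k, c k ^ 2 := by
  classical
  simp only [inner_add_right, inner_smul_right, orthonormal_iff_ite.mp hv, mul_add, add_mul,
    mul_ite, ite_mul, mul_one, mul_zero, zero_mul, sum_add_distrib, sum_ite_eq, sum_ite_eq',
    mem_univ, if_true, ← sq]
  rw [sum_congr rfl fun k _ => mul_comm ⟪v k, d k⟫_𝕜 (c k)]
  ring

theorem OrthonormalBasis.sum_sum_inner_mul_inner_of_skew (B : OrthonormalBasis ι 𝕜 E) {d : ι → E}
    (hskew : ∀ j k, ⟪B j, d k⟫_𝕜 + ⟪d j, B k⟫_𝕜 = 0) :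
    ∑ j, ∑ k, ⟪B j, d k⟫_𝕜 * ⟪B k, d j⟫_𝕜 = -∑ k, (‖d k‖ ^ 2 : 𝕜) := by
  have hswap : ∀ j k, ⟪B k, d j⟫_𝕜 = -⟪d k, B j⟫_𝕜 := fun j k =>
    eq_neg_of_add_eq_zero_left (hskew k j)
  calc ∑ j, ∑ k, ⟪B j, d k⟫_𝕜 * ⟪B k, d j⟫_𝕜
      = ∑ k, -∑ j, ⟪d k, B j⟫_𝕜 * ⟪B j, d k⟫_𝕜 := by
        rw [sum_comm]
        refine sum_congr rfl fun k _ => ?_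
        rw [← sum_neg_distrib]
        exact sum_congr rfl fun j _ => by rw [hswap j k]; ring
    _ = -∑ k, (‖d k‖ ^ 2 : 𝕜) := by
        simp only [B.sum_inner_mul_inner, inner_self_eq_norm_sq_to_K, sum_neg_distrib]

end Inner

section Hamiltonian

variable {E : Type*} [NormedAddCommGroup E] [InnerProductSpace ℂ E] {N : ℕ}

theorem HSA_eq_smul_sum_ketBra (n n' : Fin N → ℝ → E) (θ : Fin N → ℝ → ℝ) (t : ℝ) :
    HSA n n' θ t
      = Complex.I • ∑ j, ketBra (n' j t + (Complex.I * (θ j t : ℂ)) • n j t) (n j t) := by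
  simp only [HSA, ketBra_add_left, ketBra_smul_left]

theorem trace_HSA_comp_HSA [FiniteDimensional ℂ E] {n n' : Fin N → ℝ → E} {t : ℝ}
    (hON : Orthonormal ℂ (fun j => n j t))
    (hspan : Submodule.span ℂ (Set.range (fun j => n j t)) = ⊤)
    (hskew : ∀ j k, ⟪n j t, n' k t⟫_ℂ + ⟪n' j t, n k t⟫_ℂ = 0) (θ : Fin N → ℝ → ℝ) :
    LinearMap.trace ℂ E (((HSA n n' θ t).comp (HSA n n' θ t) : E →L[ℂ] E) : E →ₗ[ℂ] E)
      = ∑ k, (((‖n' k t‖ ^ 2 + θ k t ^ 2 : ℝ) : ℂ)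
          + 2 * Complex.I * θ k t * ⟪n' k t, n k t⟫_ℂ) := by
  have hparseval := (OrthonormalBasis.mk hON hspan.ge).sum_sum_inner_mul_inner_of_skew
    (d := fun k => n' k t) (by simpa only [OrthonormalBasis.coe_mk] using hskew)
  simp only [OrthonormalBasis.coe_mk, RCLike.ofReal_eq_complex_ofReal] at hparseval
  rw [HSA_eq_smul_sum_ketBra, ContinuousLinearMap.smul_comp, ContinuousLinearMap.comp_smul,
    smul_smul, ContinuousLinearMap.toLinearMap_smul, map_smul, trace_sum_ketBra_comp_self,
    hON.sum_sum_inner_add_smul_mul_inner_add_smul, hparseval, smul_eq_mul]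
  have hdiag : ∀ k, ⟪n k t, n' k t⟫_ℂ = -⟪n' k t, n k t⟫_ℂ := fun k =>
    eq_neg_of_add_eq_zero_left (hskew k k)
  simp only [hdiag]
  push_cast
  simp only [sum_add_distrib, mul_pow, mul_assoc, mul_neg, sum_neg_distrib, ← mul_sum]
  rw [← mul_assoc, Complex.I_mul_I, Complex.I_sq]
  ring

end Hamiltonian

/-- Theorem 1, pointwise form: with `b_j = −i⟪ṅ_j(t), n_j(t)⟫` (each a real number), for
every choice of real parameters `θ_j`,
`Re Tr[H_SA(t)²] = Σ_j (‖ṅ_j(t)‖² + (θ_j − b_j)² − b_j²) ≥ Σ_j (‖ṅ_j(t)‖² − b_j²)`,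
with equality iff `θ_j = b_j` for all `j`.  Hence the energy density of the generalized
transitionless Hamiltonian is uniquely minimized by `θ_j = −i⟪ṅ_j(t), n_j(t)⟫`. -/
theorem energy_density_minimized_pointwise
    {E : Type*} [NormedAddCommGroup E] [InnerProductSpace ℂ E] [FiniteDimensional ℂ E]
    {N : ℕ} (n n' : Fin N → ℝ → E)
    (hON : ∀ t : ℝ, Orthonormal ℂ (fun j : Fin N => n j t))
    (hspan : ∀ t : ℝ, Submodule.span ℂ (Set.range (fun j : Fin N => n j t)) = ⊤)
    (hn : ∀ (j : Fin N) (t : ℝ), HasDerivAt (n j) (n' j t) t)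
    (t : ℝ) (b : Fin N → ℂ)
    (hb : ∀ j : Fin N, b j = -Complex.I * (inner ℂ (n' j t) (n j t) : ℂ)) :
    (∀ j : Fin N, (b j).im = 0) ∧
    ∀ θ : Fin N → ℝ,
      ((LinearMap.trace ℂ E
          (((HSA n n' (fun j _ => θ j) t).comp (HSA n n' (fun j _ => θ j) t) : E →L[ℂ] E) :
            E →ₗ[ℂ] E)).re
        = ∑ j : Fin N, (‖n' j t‖ ^ 2 + (θ j - (b j).re) ^ 2 - (b j).re ^ 2)) ∧
      ((LinearMap.trace ℂ E
          (((HSA n n' (fun j _ => θ j) t).comp (HSA n n' (fun j _ => θ j) t) : E →L[ℂ] E) :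
            E →ₗ[ℂ] E)).re
        ≥ ∑ j : Fin N, (‖n' j t‖ ^ 2 - (b j).re ^ 2)) ∧
      (((LinearMap.trace ℂ E
          (((HSA n n' (fun j _ => θ j) t).comp (HSA n n' (fun j _ => θ j) t) : E →L[ℂ] E) :
            E →ₗ[ℂ] E)).re
        = ∑ j : Fin N, (‖n' j t‖ ^ 2 - (b j).re ^ 2)) ↔ ∀ j : Fin N, θ j = (b j).re) := by
  have hskew : ∀ j k, ⟪n j t, n' k t⟫_ℂ + ⟪n' j t, n k t⟫_ℂ = 0 := fun j k =>
    inner_add_inner_eq_zero_of_hasDerivAt (hn j t) (hn k t) fun s =>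
      orthonormal_iff_ite.mp (hON s) j k
  have hb_re : ∀ j, (b j).re = (⟪n' j t, n j t⟫_ℂ).im := fun j => by
    simp [hb j]
  refine ⟨fun j => ?_, fun θ => ?_⟩
  · have hre : (⟪n' j t, n j t⟫_ℂ).re = 0 :=
      re_inner_eq_zero_of_inner_add_inner_swap_eq_zero ((add_comm _ _).trans (hskew j j))
    simp [hb j, hre]
  have htrace : (LinearMap.trace ℂ E
          (((HSA n n' (fun j _ => θ j) t).comp (HSA n n' (fun j _ => θ j) t) : E →L[ℂ] E) :
            E →ₗ[ℂ] E)).re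
        = ∑ j : Fin N, (‖n' j t‖ ^ 2 + (θ j - (b j).re) ^ 2 - (b j).re ^ 2) := by
    rw [trace_HSA_comp_HSA (hON t) (hspan t) hskew, Complex.re_sum]
    refine sum_congr rfl fun k _ => ?_
    rw [hb_re k]
    simp only [Complex.add_re, Complex.ofReal_re, Complex.mul_re, Complex.mul_im, Complex.I_re,
      Complex.I_im, Complex.re_ofNat, Complex.im_ofNat, Complex.ofReal_im]
    ring
  have hle : ∀ j ∈ univ, ‖n' j t‖ ^ 2 - (b j).re ^ 2
      ≤ ‖n' j t‖ ^ 2 + (θ j - (b j).re) ^ 2 - (b j).re ^ 2 := fun j _ => by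
    linarith [sq_nonneg (θ j - (b j).re)]
  rw [htrace]
  refine ⟨rfl, sum_le_sum hle,
    eq_comm.trans ((sum_eq_sum_iff_of_le hle).trans (forall_congr' fun j => ?_))⟩
  rw [← sub_eq_zero (a := θ j), ← pow_eq_zero_iff two_ne_zero]
  simp only [mem_univ, true_implies]
  constructor <;> intro h <;> linarith
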